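/- For every β with 0 < β < 2π there exists a constant C₃(β) > 0 such that |∂_k² f(x)| ≤ C₃(β)/‖x‖⁴ for k = 1,2 and all x ∈ [−2π+β, 2π−β] × [−2π+β, 2π−β] \ {0}. -/

import Mathlib

/-! By concavity of `sin` on `[0, π − β/2]`, `1 − cos t = 2 sin²(t/2) ≥ c t²` for
`|t| ≤ 2π − β`. Since `ψ = (1/L) ∑ (1 − cos (s_ℓ · x))` and two of the frequencies are the
coordinate vectors, this gives `ψ(x) ≥ (c/L) ‖x‖²` on the box. Along a coordinate line
`(1/ψ)'' = (2 ψ'² − ψ'' ψ) / ψ³`, where `|ψ'| ≤ K ‖x‖` (from `|sin θ| ≤ |θ|`) and `|ψ''| ≤ K`;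
so the numerator is `O(‖x‖²)` and the denominator is at least of order `‖x‖⁶`. The bound for
`∂₂` is the bound for `∂₁` applied to the swapped frequencies. -/

open Real

noncomputable section

/-- `ψ(x) = 1 − (1/L) ∑_{ℓ=1}^L cos(s_ℓ · x)`. -/
def psi (L : ℕ) (s : Fin L → ℤ × ℤ) (x y : ℝ) : ℝ :=
  1 - (1 / L) * ∑ ℓ, Real.cos ((s ℓ).1 * x + (s ℓ).2 * y)

/-- `f = 1/ψ`. -/
def f (L : ℕ) (s : Fin L → ℤ × ℤ) (x y : ℝ) : ℝ := 1 / psi L s x y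

theorem sin_div_mul_le_sin {M u : ℝ} (hM : 0 < M) (hMπ : M ≤ π) (hu : 0 ≤ u) (huM : u ≤ M) :
    sin M / M * u ≤ sin u := by
  have hconc := strictConcaveOn_sin_Icc.concaveOn.2 ⟨le_rfl, pi_pos.le⟩ ⟨hM.le, hMπ⟩
    (sub_nonneg.2 ((div_le_one hM).2 huM)) (div_nonneg hu hM.le) (sub_add_cancel 1 (u / M))
  have hu' : (1 - u / M) • (0 : ℝ) + (u / M) • M = u := by
    simp only [smul_eq_mul, mul_zero, zero_add]; field_simp
  rw [hu'] at hconc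
  simp only [smul_eq_mul, sin_zero, mul_zero, zero_add] at hconc
  calc sin M / M * u = u / M * sin M := by ring
    _ ≤ sin u := hconc

theorem mul_sq_le_one_sub_cos {M t : ℝ} (hM : 0 < M) (hMπ : M ≤ π) (ht : |t| ≤ 2 * M) :
    (sin M / M) ^ 2 / 2 * t ^ 2 ≤ 1 - cos t := by
  have hsin : sin M / M * (|t| / 2) ≤ sin (|t| / 2) :=
    sin_div_mul_le_sin hM hMπ (by positivity) (by linarith)
  have hk : 0 ≤ sin M / M := div_nonneg (sin_nonneg_of_nonneg_of_le_pi hM.le hMπ) hM.le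
  have hsq := pow_le_pow_left₀ (by positivity) hsin 2
  have hcos : 1 - cos t = 2 * sin (|t| / 2) ^ 2 := by
    rw [sin_sq_eq_half_sub, mul_div_cancel₀ _ two_ne_zero, cos_abs]; ring
  rw [hcos]
  nlinarith [sq_abs t]

theorem iteratedDeriv_two_one_div {g g' : ℝ → ℝ} {g'' x : ℝ}
    (hg : ∀ t, HasDerivAt g (g' t) t) (hg' : HasDerivAt g' g'' x) (hx : g x ≠ 0) :
    iteratedDeriv 2 (fun t => 1 / g t) x = (2 * g' x ^ 2 - g'' * g x) / g x ^ 3 := by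
  have hderiv : deriv (fun t => 1 / g t) =ᶠ[nhds x] fun t => -g' t / g t ^ 2 := by
    filter_upwards [(hg x).continuousAt.eventually_ne hx] with t ht
    simpa only [one_div] using ((hg t).fun_inv ht).deriv
  rw [iteratedDeriv_succ, iteratedDeriv_one, hderiv.deriv_eq,
    (hg'.fun_neg.fun_div ((hg x).fun_pow 2) (pow_ne_zero 2 hx)).deriv]
  field_simp
  ring

theorem abs_two_mul_sq_sub_mul_div_cube_le {G₀ G₁ G₂ c K r : ℝ} (hc : 0 < c) (hr : 0 < r)
    (h₀ : c * r ^ 2 ≤ G₀) (h₁ : |G₁| ≤ K * r) (h₂ : |G₂| ≤ K) :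
    |(2 * G₁ ^ 2 - G₂ * G₀) / G₀ ^ 3| ≤ (2 * K ^ 2 / c ^ 3 + K / c ^ 2) / r ^ 4 := by
  have hG₀ : 0 < G₀ := lt_of_lt_of_le (by positivity) h₀
  have hK : 0 ≤ K := (abs_nonneg _).trans h₂
  have hG₁ : G₁ ^ 2 ≤ K ^ 2 * r ^ 2 := by
    rw [← mul_pow, ← sq_abs]; exact pow_le_pow_left₀ (abs_nonneg _) h₁ 2
  have hnum : |2 * G₁ ^ 2 - G₂ * G₀| ≤ 2 * K ^ 2 * r ^ 2 + K * G₀ := by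
    calc |2 * G₁ ^ 2 - G₂ * G₀| ≤ |2 * G₁ ^ 2| + |G₂ * G₀| := abs_sub _ _
      _ = 2 * G₁ ^ 2 + |G₂| * G₀ := by
          rw [abs_of_nonneg (by positivity : (0 : ℝ) ≤ 2 * G₁ ^ 2), abs_mul, abs_of_pos hG₀]
      _ ≤ 2 * K ^ 2 * r ^ 2 + K * G₀ := by
          linarith [mul_le_mul_of_nonneg_right h₂ hG₀.le]
  calc |(2 * G₁ ^ 2 - G₂ * G₀) / G₀ ^ 3|
      ≤ (2 * K ^ 2 * r ^ 2 + K * G₀) / G₀ ^ 3 := by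
        rw [abs_div, abs_of_pos (pow_pos hG₀ 3)]; gcongr
    _ = 2 * K ^ 2 * r ^ 2 / G₀ ^ 3 + K / G₀ ^ 2 := by field_simp
    _ ≤ 2 * K ^ 2 * r ^ 2 / (c * r ^ 2) ^ 3 + K / (c * r ^ 2) ^ 2 := by gcongr
    _ = (2 * K ^ 2 / c ^ 3 + K / c ^ 2) / r ^ 4 := by field_simp

theorem abs_mean_le {L : ℕ} {u v : Fin L → ℝ} (h : ∀ ℓ, |u ℓ| ≤ v ℓ) :
    |(1 / (L : ℝ)) * ∑ ℓ, u ℓ| ≤ (1 / L) * ∑ ℓ, v ℓ := by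
  rw [abs_mul, abs_of_nonneg (by positivity)]
  gcongr
  exact (Finset.abs_sum_le_sum_abs _ _).trans (Finset.sum_le_sum fun ℓ _ => h ℓ)

def psiPartial₁ (L : ℕ) (s : Fin L → ℤ × ℤ) (x y : ℝ) : ℝ :=
  (1 / L) * ∑ ℓ, ((s ℓ).1 : ℝ) * sin ((s ℓ).1 * x + (s ℓ).2 * y)

def psiPartial₁₁ (L : ℕ) (s : Fin L → ℤ × ℤ) (x y : ℝ) : ℝ :=
  (1 / L) * ∑ ℓ, ((s ℓ).1 : ℝ) ^ 2 * cos ((s ℓ).1 * x + (s ℓ).2 * y)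

def freqNorm (L : ℕ) (s : Fin L → ℤ × ℤ) : ℝ :=
  (1 / L) * ∑ ℓ, (|((s ℓ).1 : ℝ)| + |((s ℓ).2 : ℝ)|) ^ 2

def psiLowerConst (L : ℕ) (M : ℝ) : ℝ := (sin M / M) ^ 2 / 2 / L

def secondPartialConst (L : ℕ) (s : Fin L → ℤ × ℤ) (M : ℝ) : ℝ :=
  2 * freqNorm L s ^ 2 / psiLowerConst L M ^ 3 + freqNorm L s / psiLowerConst L M ^ 2

theorem psiLowerConst_pos {L : ℕ} (hL : 0 < L) {M : ℝ} (hM : 0 < M) (hMπ : M < π) :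
    0 < psiLowerConst L M := by
  have := sin_pos_of_pos_of_lt_pi hM hMπ
  unfold psiLowerConst
  positivity

section

variable {L : ℕ} (s : Fin L → ℤ × ℤ)

theorem hasDerivAt_psi_fst (x y : ℝ) :
    HasDerivAt (fun t => psi L s t y) (psiPartial₁ L s x y) x := by
  have hcos (ℓ : Fin L) : HasDerivAt (fun t => cos ((s ℓ).1 * t + (s ℓ).2 * y))
      (-(s ℓ).1 * sin ((s ℓ).1 * x + (s ℓ).2 * y)) x := by
    simpa [mul_comm] using
      (((hasDerivAt_id' x).const_mul ((s ℓ).1 : ℝ)).add_const ((s ℓ).2 * y)).cos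
  refine (((HasDerivAt.fun_sum fun ℓ _ => hcos ℓ).const_mul (1 / (L : ℝ))).const_sub 1)
    |>.congr_deriv ?_
  simp [psiPartial₁, Finset.mul_sum]

theorem hasDerivAt_psiPartial₁_fst (x y : ℝ) :
    HasDerivAt (fun t => psiPartial₁ L s t y) (psiPartial₁₁ L s x y) x := by
  have hsin (ℓ : Fin L) : HasDerivAt (fun t => ((s ℓ).1 : ℝ) * sin ((s ℓ).1 * t + (s ℓ).2 * y))
      (((s ℓ).1 : ℝ) ^ 2 * cos ((s ℓ).1 * x + (s ℓ).2 * y)) x := by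
    refine ((((hasDerivAt_id' x).const_mul ((s ℓ).1 : ℝ)).add_const ((s ℓ).2 * y)).sin.const_mul
      ((s ℓ).1 : ℝ)).congr_deriv ?_
    ring
  exact (HasDerivAt.fun_sum fun ℓ _ => hsin ℓ).const_mul (1 / (L : ℝ))

theorem iteratedDeriv_two_f_fst {x y : ℝ} (h : psi L s x y ≠ 0) :
    iteratedDeriv 2 (fun t => f L s t y) x =
      (2 * psiPartial₁ L s x y ^ 2 - psiPartial₁₁ L s x y * psi L s x y) / psi L s x y ^ 3 :=
  iteratedDeriv_two_one_div (fun t => hasDerivAt_psi_fst s t y)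
    (hasDerivAt_psiPartial₁_fst s x y) h

theorem abs_psiPartial₁_le (x y : ℝ) :
    |psiPartial₁ L s x y| ≤ freqNorm L s * √(x ^ 2 + y ^ 2) := by
  have hx : |x| ≤ √(x ^ 2 + y ^ 2) := abs_le_sqrt (by nlinarith)
  have hy : |y| ≤ √(x ^ 2 + y ^ 2) := abs_le_sqrt (by nlinarith)
  rw [freqNorm, mul_assoc, Finset.sum_mul]
  refine abs_mean_le fun ℓ => ?_
  set a : ℝ := ((s ℓ).1 : ℝ)
  set b : ℝ := ((s ℓ).2 : ℝ)
  calc |a * sin (a * x + b * y)| ≤ |a| * (|a| * |x| + |b| * |y|) := by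
        rw [abs_mul, ← abs_mul a x, ← abs_mul b y]
        gcongr
        exact abs_sin_le_abs.trans (abs_add_le _ _)
    _ ≤ (|a| + |b|) * ((|a| + |b|) * √(x ^ 2 + y ^ 2)) := by
        gcongr
        · linarith [abs_nonneg b]
        · nlinarith [abs_nonneg a, abs_nonneg b]
    _ = (|a| + |b|) ^ 2 * √(x ^ 2 + y ^ 2) := by ring

theorem abs_psiPartial₁₁_le (x y : ℝ) : |psiPartial₁₁ L s x y| ≤ freqNorm L s := by
  refine abs_mean_le fun ℓ => ?_
  have hcos := abs_cos_le_one (((s ℓ).1 : ℝ) * x + (s ℓ).2 * y)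
  rw [abs_mul, abs_pow]
  nlinarith [abs_nonneg ((s ℓ).1 : ℝ), abs_nonneg ((s ℓ).2 : ℝ), sq_nonneg ((s ℓ).1 : ℝ)]

theorem psi_eq_mean_one_sub_cos (hL : L ≠ 0) (x y : ℝ) :
    psi L s x y = (1 / L) * ∑ ℓ, (1 - cos ((s ℓ).1 * x + (s ℓ).2 * y)) := by
  rw [psi, Finset.sum_sub_distrib, Finset.sum_const, Finset.card_univ, Fintype.card_fin,
    nsmul_one, mul_sub, one_div_mul_cancel (Nat.cast_ne_zero.2 hL)]

theorem one_sub_cos_add_one_sub_cos_le {i j : Fin L} (hi : s i = (1, 0)) (hj : s j = (0, 1))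
    (x y : ℝ) :
    (1 - cos x) + (1 - cos y) ≤ ∑ ℓ, (1 - cos ((s ℓ).1 * x + (s ℓ).2 * y)) := by
  have hij : i ≠ j := fun h => by simp [h, hj] at hi
  calc (1 - cos x) + (1 - cos y)
      = ∑ ℓ ∈ {i, j}, (1 - cos ((s ℓ).1 * x + (s ℓ).2 * y)) := by
        simp [Finset.sum_pair hij, hi, hj]
    _ ≤ _ := Finset.sum_le_sum_of_subset_of_nonneg (Finset.subset_univ _)
        fun ℓ _ _ => sub_nonneg.2 (cos_le_one _)

theorem psiLowerConst_mul_le_psi {i j : Fin L} (hi : s i = (1, 0)) (hj : s j = (0, 1))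
    {M x y : ℝ} (hM : 0 < M) (hMπ : M ≤ π) (hx : |x| ≤ 2 * M) (hy : |y| ≤ 2 * M) :
    psiLowerConst L M * (x ^ 2 + y ^ 2) ≤ psi L s x y := by
  have hsum := one_sub_cos_add_one_sub_cos_le s hi hj x y
  have hcx := mul_sq_le_one_sub_cos hM hMπ hx
  have hcy := mul_sq_le_one_sub_cos hM hMπ hy
  rw [psi_eq_mean_one_sub_cos s (Fin.pos i).ne', psiLowerConst, div_eq_mul_one_div _ (L : ℝ),
    mul_comm _ (1 / (L : ℝ)), mul_assoc]
  gcongr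
  linarith

theorem freqNorm_pos {i : Fin L} (hi : s i = (1, 0)) : 0 < freqNorm L s := by
  have hL : (0 : ℝ) < L := Nat.cast_pos.2 (Fin.pos i)
  have hterm : (1 : ℝ) ≤ ∑ ℓ, (|((s ℓ).1 : ℝ)| + |((s ℓ).2 : ℝ)|) ^ 2 := by
    refine le_of_eq_of_le ?_ (Finset.single_le_sum (fun ℓ _ => sq_nonneg _) (Finset.mem_univ i))
    simp [hi]
  unfold freqNorm
  positivity

theorem abs_iteratedDeriv_two_f_fst_le {i j : Fin L} (hi : s i = (1, 0)) (hj : s j = (0, 1))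
    {M x y : ℝ} (hM : 0 < M) (hMπ : M < π) (hx : |x| ≤ 2 * M) (hy : |y| ≤ 2 * M)
    (hxy : (x, y) ≠ (0, 0)) :
    |iteratedDeriv 2 (fun t => f L s t y) x| ≤
      secondPartialConst L s M / √(x ^ 2 + y ^ 2) ^ 4 := by
  have hc := psiLowerConst_pos (Fin.pos i) hM hMπ
  have hr : 0 < √(x ^ 2 + y ^ 2) := by
    refine sqrt_pos.2 ?_
    rcases not_and_or.1 (mt Prod.ext_iff.2 hxy) with h | h <;> positivity
  have hlower := psiLowerConst_mul_le_psi s hi hj hM hMπ.le hx hy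
  rw [← sq_sqrt (by positivity : 0 ≤ x ^ 2 + y ^ 2)] at hlower
  rw [iteratedDeriv_two_f_fst s (lt_of_lt_of_le (by positivity) hlower).ne']
  exact abs_two_mul_sq_sub_mul_div_cube_le hc hr hlower (abs_psiPartial₁_le s x y)
    (abs_psiPartial₁₁_le s x y)

theorem psi_comp_swap (x y : ℝ) : psi L (Prod.swap ∘ s) y x = psi L s x y := by
  simp only [psi, Function.comp_apply, Prod.fst_swap, Prod.snd_swap, add_comm]

theorem freqNorm_comp_swap : freqNorm L (Prod.swap ∘ s) = freqNorm L s := by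
  simp only [freqNorm, Function.comp_apply, Prod.fst_swap, Prod.snd_swap, add_comm]

theorem abs_iteratedDeriv_two_f_snd_le {i j : Fin L} (hi : s i = (1, 0)) (hj : s j = (0, 1))
    {M x y : ℝ} (hM : 0 < M) (hMπ : M < π) (hx : |x| ≤ 2 * M) (hy : |y| ≤ 2 * M)
    (hxy : (x, y) ≠ (0, 0)) :
    |iteratedDeriv 2 (fun t => f L s x t) y| ≤
      secondPartialConst L s M / √(x ^ 2 + y ^ 2) ^ 4 := by
  have h := abs_iteratedDeriv_two_f_fst_le (Prod.swap ∘ s) (i := j) (j := i)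
    (by simp [hj]) (by simp [hi]) hM hMπ hy hx (by simpa [and_comm] using hxy)
  simpa only [f, psi_comp_swap, secondPartialConst, freqNorm_comp_swap, add_comm (y ^ 2)] using h

theorem secondPartialConst_pos {i : Fin L} (hi : s i = (1, 0)) {M : ℝ} (hM : 0 < M)
    (hMπ : M < π) : 0 < secondPartialConst L s M := by
  have := freqNorm_pos s hi
  have := psiLowerConst_pos (Fin.pos i) hM hMπ
  unfold secondPartialConst
  positivity

end

/-- for every `β ∈ (0, 2π)` there is `C₃(β) > 0` such that for `k = 1,2`,
`|∂_k² f(x)| ≤ C₃(β)/‖x‖⁴` on `[−2π+β, 2π−β]² \ {0}`. -/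
theorem second_partials_f_bound (L : ℕ) (hL : 2 ≤ L) (s : Fin L → ℤ × ℤ)
    (h1 : s ⟨0, by omega⟩ = (1, 0)) (h2 : s ⟨1, by omega⟩ = (0, 1))
    (β : ℝ) (hβ0 : 0 < β) (hβ2π : β < 2 * π) :
    ∃ C₃ : ℝ, 0 < C₃ ∧
      ∀ x y : ℝ, x ∈ Set.Icc (-(2 * π) + β) (2 * π - β) →
        y ∈ Set.Icc (-(2 * π) + β) (2 * π - β) → (x, y) ≠ (0, 0) →
        |iteratedDeriv 2 (fun t => f L s t y) x| ≤ C₃ / Real.sqrt (x ^ 2 + y ^ 2) ^ 4 ∧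
        |iteratedDeriv 2 (fun t => f L s x t) y| ≤ C₃ / Real.sqrt (x ^ 2 + y ^ 2) ^ 4 := by
  have hM : 0 < π - β / 2 := by linarith
  have hMπ : π - β / 2 < π := by linarith
  have hbox {t : ℝ} (ht : t ∈ Set.Icc (-(2 * π) + β) (2 * π - β)) : |t| ≤ 2 * (π - β / 2) :=
    abs_le.2 ⟨by linarith [ht.1], by linarith [ht.2]⟩
  exact ⟨secondPartialConst L s (π - β / 2), secondPartialConst_pos s h1 hM hMπ,
    fun x y hx hy hxy =>
      ⟨abs_iteratedDeriv_two_f_fst_le s h1 h2 hM hMπ (hbox hx) (hbox hy) hxy,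
        abs_iteratedDeriv_two_f_snd_le s h1 h2 hM hMπ (hbox hx) (hbox hy) hxy⟩⟩

end
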